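/- arXiv:2310.13816 — 7 statements merged into one kernel-verified Lean document; each statement's English description precedes it below -/
import Mathlib

section
/- Let M be a locally compact Hausdorff topological space, let φ be a semi-dynamical system on M with no start points, and let A ⊆ M be a compact, invariant, asymptotically stable attractor with domain of attraction D(A). Then A is a weak deformation retract of D(A): every open neighbourhood U of A in D(A) contains a set V with A ⊆ V ⊆ U such that V is a strong deformation retract of D(A). -/
open unitInterval

/-- `φ` is a (global) semi-dynamical system (semi-flow) on `M`: a jointly continuous map
`[0,∞) × M → M` satisfying the identity and semi-group axioms. -/
def IsSemiFlow {M : Type*} [TopologicalSpace M] (φ : NNReal → M → M) : Prop :=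
  Continuous (fun p : NNReal × M => φ p.1 p.2) ∧
    (∀ x : M, φ 0 x = x) ∧
    ∀ (s t : NNReal) (x : M), φ s (φ t x) = φ (s + t) x

/-- `φ` has no start points: every point is `φ t y` for some `t > 0`. -/
def HasNoStartPoints {M : Type*} [TopologicalSpace M] (φ : NNReal → M → M) : Prop :=
  ∀ x : M, ∃ t : NNReal, 0 < t ∧ ∃ y : M, φ t y = x

/-- `A` is invariant under `φ`. -/
def IsInvariantSet {M : Type*} [TopologicalSpace M] (φ : NNReal → M → M) (A : Set M) : Prop :=
  ∀ t : NNReal, φ t '' A = A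

/-- Lyapunov stability of `A` under `φ`. -/
def IsLyapunovStable {M : Type*} [TopologicalSpace M] (φ : NNReal → M → M) (A : Set M) : Prop :=
  ∀ Uε : Set M, IsOpen Uε → A ⊆ Uε →
    ∃ Uδ : Set M, IsOpen Uδ ∧ A ⊆ Uδ ∧ Uδ ⊆ Uε ∧ ∀ t : NNReal, φ t '' Uδ ⊆ Uε

/-- The semi-flow initialized at `p` converges to `A`. -/
def AttractsFrom {M : Type*} [TopologicalSpace M] (φ : NNReal → M → M) (A : Set M)
    (p : M) : Prop :=
  ∀ V : Set M, IsOpen V → A ⊆ V → ∃ T : NNReal, ∀ t : NNReal, T ≤ t → φ t p ∈ V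

/-- Local attractivity of `A` under `φ`. -/
def IsLocallyAttractive {M : Type*} [TopologicalSpace M] (φ : NNReal → M → M)
    (A : Set M) : Prop :=
  ∃ W : Set M, IsOpen W ∧ A ⊆ W ∧ ∀ p ∈ W, AttractsFrom φ A p

/-- `A` is a compact, invariant, (locally) asymptotically stable attractor under `φ`. -/
def IsAsymptoticallyStableAttractor {M : Type*} [TopologicalSpace M] (φ : NNReal → M → M)
    (A : Set M) : Prop :=
  IsCompact A ∧ IsInvariantSet φ A ∧ IsLyapunovStable φ A ∧ IsLocallyAttractive φ A

/-- The domain of attraction of `A` under `φ`. -/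
def domainOfAttraction {M : Type*} [TopologicalSpace M] (φ : NNReal → M → M)
    (A : Set M) : Set M :=
  {p : M | AttractsFrom φ A p}

/-- `A` is a strong deformation retract of `X`. -/
def IsStrongDeformationRetract {X : Type*} [TopologicalSpace X] (A : Set X) : Prop :=
  ∃ H : X × I → X, Continuous H ∧ (∀ x : X, H (x, 0) = x) ∧ (∀ x : X, H (x, 1) ∈ A) ∧
    ∀ a ∈ A, ∀ s : I, H (a, s) = a

/-- The inclusion `A ↪ X` is a cofibration: it has the homotopy extension property with
respect to every topological space `Y`. -/
def InclusionIsCofibration {X : Type*} [TopologicalSpace X] (A : Set X) : Prop :=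
  ∀ (Y : Type*) [TopologicalSpace Y] (g : X → Y) (h : ↥A × I → Y),
    Continuous g → Continuous h → (∀ a : A, h (a, 0) = g (a : X)) →
      ∃ G : X × I → Y, Continuous G ∧ (∀ x : X, G (x, 0) = g x) ∧
        ∀ (a : A) (s : I), G ((a : X), s) = h (a, s)

/-!
Choose a compact `C` with `A ⊆ interior C` and `C ⊆ U`, and an Urysohn function `f` that vanishes
on `C` and is `1` off `U`. By Lyapunov stability, orbits starting near a point of `D(A)` all lie in
`C` after a common time, so near each such point `L x = sup_t e^t f (φ t x)` is a supremum over a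
compact time interval; hence `L` is continuous on `D(A)`, `f ≤ L`, `L = 0` on `A`, and
`L (φ u x) ≤ e^(-u) L x`. Flowing each `x` for time `s · log (max 1 (2 L x))`, `s ∈ [0, 1]`, then
deforms `D(A)` onto `{L ≤ 1/2} ⊆ U` while fixing that set pointwise.
-/

open Set Filter Topology

theorem range_eq_image_Icc_of_forall_ge_eq {β : Type*} {F : NNReal → β} {T : NNReal}
    (hT : ∀ t, T ≤ t → F t = F T) : range F = F '' Icc 0 T := by
  refine Subset.antisymm ?_ (image_subset_range F _)
  rintro - ⟨t, rfl⟩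
  rcases le_total t T with ht | ht
  · exact ⟨t, ⟨zero_le, ht⟩, rfl⟩
  · exact ⟨T, ⟨zero_le, le_rfl⟩, (hT t ht).symm⟩

theorem bddAbove_range_of_forall_ge_eq_zero {F : NNReal → ℝ} (hF : Continuous F) {T : NNReal}
    (hT : ∀ t, T ≤ t → F t = 0) : BddAbove (range F) := by
  rw [range_eq_image_Icc_of_forall_ge_eq fun t ht => (hT t ht).trans (hT T le_rfl).symm]
  exact (isCompact_Icc.image hF).bddAbove

theorem continuousAt_iSup_of_eventually_forall_ge_eq_zero {X : Type*} [TopologicalSpace X]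
    {F : NNReal → X → ℝ} (hF : Continuous fun p : NNReal × X => F p.1 p.2) {x : X}
    {T : NNReal} (hT : ∀ᶠ y in 𝓝 x, ∀ t, T ≤ t → F t y = 0) :
    ContinuousAt (fun y => ⨆ t, F t y) x := by
  have hsup : Continuous fun y => sSup ((fun t => F t y) '' Icc 0 T) :=
    isCompact_Icc.continuous_sSup (hF.comp continuous_swap)
  refine hsup.continuousAt.congr (hT.mono fun y hy => ?_)
  dsimp only
  rw [← sSup_range,
    range_eq_image_Icc_of_forall_ge_eq fun t ht => (hy t ht).trans (hy T le_rfl).symm]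

theorem isStrongDeformationRetract_sublevel {X : Type*} [TopologicalSpace X]
    {ψ : NNReal → X → X} (hψ : Continuous fun p : NNReal × X => ψ p.1 p.2)
    (hψ₀ : ∀ x, ψ 0 x = x) {L : X → ℝ} (hL : Continuous L)
    (hdecay : ∀ x (u : NNReal), L (ψ u x) ≤ Real.exp (-u) * L x) {c : ℝ} (hc : 0 < c) :
    IsStrongDeformationRetract {x | L x ≤ c} := by
  set τ : X → ℝ := fun x => Real.log (max 1 (L x / c))
  have hτ_cont : Continuous τ :=
    (continuous_const.max (hL.div_const c)).log fun x => (one_pos.trans_le (le_max_left _ _)).ne'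
  have hτ_nonneg (x : X) : 0 ≤ τ x := Real.log_nonneg (le_max_left _ _)
  refine ⟨fun p => ψ (Real.toNNReal (p.2 * τ p.1)) p.1, ?_, ?_, ?_, ?_⟩
  · exact hψ.comp ((continuous_real_toNNReal.comp
      ((continuous_subtype_val.comp continuous_snd).mul (hτ_cont.comp continuous_fst))).prodMk
      continuous_fst)
  · intro x
    simp [hψ₀]
  · intro x
    have hmax : 0 < max 1 (L x / c) := one_pos.trans_le (le_max_left _ _)
    calc L (ψ (Real.toNNReal ((1 : I) * τ x)) x)
        ≤ Real.exp (-τ x) * L x := by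
          simpa [Real.coe_toNNReal _ (hτ_nonneg x)] using hdecay x (τ x).toNNReal
      _ = L x / max 1 (L x / c) := by
          rw [Real.exp_neg, Real.exp_log hmax, inv_mul_eq_div]
      _ ≤ c := by
          rw [div_le_iff₀ hmax, ← div_le_iff₀' hc]
          exact le_max_right _ _
  · intro x hx s
    have hτx : τ x = 0 := by
      simp only [τ, max_eq_left ((div_le_one hc).2 hx), Real.log_one]
    simp [hτx, hψ₀]

section Attractor

variable {M : Type*} {φ : NNReal → M → M}

noncomputable def expOrbitSup (φ : NNReal → M → M) (f : M → ℝ) (x : M) : ℝ :=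
  ⨆ t : NNReal, Real.exp t * f (φ t x)

theorem expOrbitSup_flow_le {f : M → ℝ} (hadd : ∀ s t x, φ s (φ t x) = φ (s + t) x) {x : M}
    (hbdd : BddAbove (range fun t : NNReal => Real.exp t * f (φ t x))) (u : NNReal) :
    expOrbitSup φ f (φ u x) ≤ Real.exp (-u) * expOrbitSup φ f x := by
  refine ciSup_le fun t => ?_
  calc Real.exp t * f (φ t (φ u x))
      = Real.exp (-u) * (Real.exp ↑(t + u) * f (φ (t + u) x)) := by
        rw [hadd, NNReal.coe_add, ← mul_assoc, ← Real.exp_add]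
        ring_nf
    _ ≤ Real.exp (-u) * expOrbitSup φ f x :=
        mul_le_mul_of_nonneg_left (le_ciSup hbdd (t + u)) (Real.exp_pos _).le

theorem le_expOrbitSup {f : M → ℝ} {x : M} (hφ₀ : φ 0 x = x)
    (hbdd : BddAbove (range fun t : NNReal => Real.exp t * f (φ t x))) :
    f x ≤ expOrbitSup φ f x := by
  simpa [expOrbitSup, hφ₀] using le_ciSup hbdd 0

theorem expOrbitSup_eq_zero {f : M → ℝ} {x : M} (h : ∀ t, f (φ t x) = 0) :
    expOrbitSup φ f x = 0 := by
  simp [expOrbitSup, h]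

variable [TopologicalSpace M] {A : Set M}

theorem subset_domainOfAttraction (hA : IsInvariantSet φ A) : A ⊆ domainOfAttraction φ A :=
  fun _ ha _ _ hAV => ⟨0, fun t _ => hAV (hA t ▸ mem_image_of_mem (φ t) ha)⟩

theorem flow_mem_domainOfAttraction (hadd : ∀ s t x, φ s (φ t x) = φ (s + t) x) {x : M}
    (hx : x ∈ domainOfAttraction φ A) (u : NNReal) : φ u x ∈ domainOfAttraction φ A := by
  intro V hV hAV
  obtain ⟨T, hT⟩ := hx V hV hAV
  exact ⟨T, fun t ht => hadd t u x ▸ hT (t + u) (ht.trans le_self_add)⟩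

theorem eventually_forall_ge_flow_mem (hcont : Continuous fun p : NNReal × M => φ p.1 p.2)
    (hadd : ∀ s t x, φ s (φ t x) = φ (s + t) x) {O C : Set M} (hO : IsOpen O) (hAO : A ⊆ O)
    (hOC : ∀ t, φ t '' O ⊆ C) {x : M} (hx : x ∈ domainOfAttraction φ A) :
    ∃ T : NNReal, ∀ᶠ y in 𝓝 x, ∀ t, T ≤ t → φ t y ∈ C := by
  obtain ⟨T, hT⟩ := hx O hO hAO
  have hφT : Continuous (φ T) := hcont.comp (continuous_const.prodMk continuous_id)
  refine ⟨T, (hφT.continuousAt.eventually_mem (hO.mem_nhds (hT T le_rfl))).mono ?_⟩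
  intro y hy t ht
  rw [← tsub_add_cancel_of_le ht, ← hadd]
  exact hOC (t - T) (mem_image_of_mem _ hy)

theorem exists_lyapunov_of_attractor [WeaklyLocallyCompactSpace M] [T2Space M]
    (hφ : IsSemiFlow φ) (hA : IsAsymptoticallyStableAttractor φ A) {U : Set M} (hU : IsOpen U)
    (hAU : A ⊆ U) :
    ∃ L : M → ℝ, ContinuousOn L (domainOfAttraction φ A) ∧ (∀ a ∈ A, L a = 0) ∧
      (∀ x ∈ domainOfAttraction φ A, x ∉ U → 1 ≤ L x) ∧
      ∀ x ∈ domainOfAttraction φ A, ∀ u : NNReal, L (φ u x) ≤ Real.exp (-u) * L x := by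
  obtain ⟨hAc, hAinv, hAstab, -⟩ := hA
  obtain ⟨hcont, hφ₀, hadd⟩ := hφ
  obtain ⟨C, hCc, hAC, hCU⟩ := exists_compact_between hAc hU hAU
  obtain ⟨O, hO, hAO, -, hOC⟩ := hAstab _ isOpen_interior hAC
  obtain ⟨f, hfC, hfU, -⟩ := exists_continuous_zero_one_of_isCompact hCc hU.isClosed_compl
    (disjoint_compl_right_iff_subset.2 hCU)
  have hF : Continuous fun p : NNReal × M => Real.exp p.1 * f (φ p.1 p.2) :=
    (Real.continuous_exp.comp (NNReal.continuous_coe.comp continuous_fst)).mul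
      (f.continuous.comp hcont)
  have hvanish : ∀ x ∈ domainOfAttraction φ A, ∃ T : NNReal,
      ∀ᶠ y in 𝓝 x, ∀ t, T ≤ t → Real.exp t * f (φ t y) = 0 := by
    intro x hx
    obtain ⟨T, hT⟩ := eventually_forall_ge_flow_mem hcont hadd hO hAO
      (fun t => (hOC t).trans interior_subset) hx
    exact ⟨T, hT.mono fun y hy t ht => by rw [hfC (hy t ht), Pi.zero_apply, mul_zero]⟩
  have hbdd : ∀ x ∈ domainOfAttraction φ A,
      BddAbove (range fun t : NNReal => Real.exp t * f (φ t x)) := fun x hx =>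
    let ⟨_, hT⟩ := hvanish x hx
    bddAbove_range_of_forall_ge_eq_zero (hF.comp (continuous_id.prodMk continuous_const))
      hT.self_of_nhds
  refine ⟨expOrbitSup φ f, fun x hx => ?_, fun a ha => ?_, fun x hx hxU => ?_,
    fun x hx => expOrbitSup_flow_le hadd (hbdd x hx)⟩
  · obtain ⟨T, hT⟩ := hvanish x hx
    exact (continuousAt_iSup_of_eventually_forall_ge_eq_zero hF hT).continuousWithinAt
  · exact expOrbitSup_eq_zero fun t =>
      hfC (interior_subset (hAC (hAinv t ▸ mem_image_of_mem (φ t) ha)))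
  · exact (hfU hxU).symm.le.trans (le_expOrbitSup (hφ₀ x) (hbdd x hx))

end Attractor

theorem weakDeformationRetract_of_attractor_general
    {M : Type*} [TopologicalSpace M] [WeaklyLocallyCompactSpace M] [T2Space M]
    (φ : NNReal → M → M) (hφ : IsSemiFlow φ)
    (A : Set M) (hA : IsAsymptoticallyStableAttractor φ A) :
    ∀ U : Set ↥(domainOfAttraction φ A), IsOpen U → Subtype.val ⁻¹' A ⊆ U →
      ∃ V : Set ↥(domainOfAttraction φ A),
        Subtype.val ⁻¹' A ⊆ V ∧ V ⊆ U ∧ IsStrongDeformationRetract V := by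
  intro U hU hAU
  obtain ⟨U', hU', rfl⟩ := isOpen_induced_iff.mp hU
  obtain ⟨L, hLcont, hLA, hLU, hdecay⟩ := exists_lyapunov_of_attractor hφ hA hU'
    fun a ha => @hAU ⟨a, subset_domainOfAttraction hA.2.1 ha⟩ ha
  obtain ⟨hcont, hφ₀, hadd⟩ := hφ
  let ψ : NNReal → domainOfAttraction φ A → domainOfAttraction φ A :=
    fun t x => ⟨φ t x, flow_mem_domainOfAttraction hadd x.2 t⟩
  have hψ : Continuous fun p : NNReal × domainOfAttraction φ A => ψ p.1 p.2 :=
    (hcont.comp (continuous_fst.prodMk (continuous_subtype_val.comp continuous_snd))).subtype_mk _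
  refine ⟨{x | L x ≤ 1 / 2}, fun x hx => ?_, fun x hx => ?_, ?_⟩
  · exact (hLA x hx).trans_le one_half_pos.le
  · by_contra hxU
    linarith [hLU x x.2 hxU, show L x ≤ 1 / 2 from hx]
  · exact isStrongDeformationRetract_sublevel hψ (fun x => Subtype.ext (hφ₀ x))
      hLcont.domRestrict (fun x u => hdecay x x.2 u) one_half_pos

/-- **Moulay–Bhat.** A compact, invariant, asymptotically stable attractor `A` on a locally
compact Hausdorff space with no start points is a weak deformation retract of its domain of
attraction `D(A)`: every open neighbourhood `U` of `A` in `D(A)` contains a set `V ⊇ A` that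
is a strong deformation retract of `D(A)`. -/
theorem weakDeformationRetract_of_attractor
    {M : Type*} [TopologicalSpace M] [WeaklyLocallyCompactSpace M] [T2Space M]
    (φ : NNReal → M → M) (hφ : IsSemiFlow φ) (hsp : HasNoStartPoints φ)
    (A : Set M) (hA : IsAsymptoticallyStableAttractor φ A) :
    ∀ U : Set ↥(domainOfAttraction φ A), IsOpen U → Subtype.val ⁻¹' A ⊆ U →
      ∃ V : Set ↥(domainOfAttraction φ A),
        Subtype.val ⁻¹' A ⊆ V ∧ V ⊆ U ∧ IsStrongDeformationRetract V :=
  weakDeformationRetract_of_attractor_general φ hφ A hA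
end

section
/- Let M be a locally compact Hausdorff topological space, let φ be a semi-dynamical system on M with no start points, and suppose the singleton A = {p} ⊆ M is an invariant, globally asymptotically stable attractor (i.e., its domain of attraction is all of M). Then M is contractible (homotopy equivalent to a one-point space). -/
open unitInterval

/-- **Sontag.** If a singleton `{p}` is an invariant, globally asymptotically stable attractor
under a semi-dynamical system without start points on a locally compact Hausdorff space `M`,
then `M` is contractible. -/
theorem contractible_of_globallyAsymptoticallyStable_point
    {M : Type*} [TopologicalSpace M] [WeaklyLocallyCompactSpace M] [T2Space M]
    (φ : NNReal → M → M) (hφ : IsSemiFlow φ) (hsp : HasNoStartPoints φ)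
    (p : M) (hA : IsAsymptoticallyStableAttractor φ {p})
    (hglob : domainOfAttraction φ {p} = Set.univ) :
    ContractibleSpace M := by
  obtain ⟨hcont, hid, hsemi⟩ := hφ
  obtain ⟨-, hAinv, hstab, -⟩ := hA
  have hattr : ∀ x : M, ∀ V : Set M, IsOpen V → ({p} : Set M) ⊆ V →
      ∃ T : NNReal, ∀ t : NNReal, T ≤ t → φ t x ∈ V := by
    intro x
    have hx : x ∈ domainOfAttraction φ {p} := by rw [hglob]; trivial
    exact hx
  set H : I × M → M := fun q =>
    if q.1 = 1 then p else φ (Real.toNNReal ((q.1 : ℝ) / (1 - (q.1 : ℝ)))) q.2 with hHdef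
  have hφt : ∀ t : NNReal, Continuous (φ t) := fun t =>
    hcont.comp (continuous_const.prodMk continuous_id)
  have hHcont : Continuous H := by
    rw [continuous_iff_continuousAt]
    rintro ⟨s₀, x₀⟩
    by_cases hs : s₀ = 1
    · subst hs
      have hH1 : H (1, x₀) = p := if_pos rfl
      rw [ContinuousAt, hH1, tendsto_nhds]
      intro U hUo hpU
      obtain ⟨Uδ, hUδo, hpUδ, hUδsub, hUδinv⟩ := hstab U hUo (Set.singleton_subset_iff.2 hpU)
      obtain ⟨T, hT⟩ := hattr x₀ Uδ hUδo hpUδ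
      set S : Set I := {s : I | (T : ℝ) / ((T : ℝ) + 1) < (s : ℝ)} with hS
      have hSo : IsOpen S := isOpen_Ioi.preimage continuous_subtype_val
      have h1S : (1 : I) ∈ S := by
        have hTpos : (0 : ℝ) < (T : ℝ) + 1 := by positivity
        simp only [hS, Set.mem_setOf_eq, Set.Icc.coe_one]
        rw [div_lt_one hTpos]
        linarith
      have hNo : IsOpen (φ T ⁻¹' Uδ) := hUδo.preimage (hφt T)
      have hx₀N : x₀ ∈ φ T ⁻¹' Uδ := hT T le_rfl
      have hsub : S ×ˢ (φ T ⁻¹' Uδ) ⊆ H ⁻¹' U := by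
        rintro ⟨s, y⟩ ⟨hsS, hyN⟩
        by_cases h1 : s = 1
        · show H (s, y) ∈ U
          simp only [hHdef, h1, if_pos rfl]
          exact hUδsub (hpUδ rfl)
        · show H (s, y) ∈ U
          have hslt : (s : ℝ) < 1 := lt_of_le_of_ne s.2.2 (fun h => h1 (Subtype.ext h))
          have hpos : (0 : ℝ) < 1 - (s : ℝ) := by linarith
          have hTpos : (0 : ℝ) < (T : ℝ) + 1 := by positivity
          have hsgt : (T : ℝ) / ((T : ℝ) + 1) < (s : ℝ) := hsS
          have hTlt : (T : ℝ) ≤ (s : ℝ) / (1 - (s : ℝ)) := by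
            rw [le_div_iff₀ hpos]
            rw [div_lt_iff₀ hTpos] at hsgt
            nlinarith
          have hTle : T ≤ Real.toNNReal ((s : ℝ) / (1 - (s : ℝ))) := by
            rw [Real.le_toNNReal_iff_coe_le (div_nonneg s.2.1 hpos.le)]
            exact hTlt
          set t := Real.toNNReal ((s : ℝ) / (1 - (s : ℝ)))
          have hsplit : φ t y = φ (t - T) (φ T y) := by
            rw [hsemi, tsub_add_cancel_of_le hTle]
          simp only [hHdef, if_neg h1]
          rw [hsplit]
          exact hUδinv (t - T) ⟨φ T y, hyN, rfl⟩
      exact Filter.mem_of_superset (prod_mem_nhds (hSo.mem_nhds h1S) (hNo.mem_nhds hx₀N)) hsub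
    · have hG : ContinuousAt
          (fun q : I × M => φ (Real.toNNReal ((q.1 : ℝ) / (1 - (q.1 : ℝ)))) q.2) (s₀, x₀) := by
        have hg : ContinuousAt
            (fun q : I × M => (Real.toNNReal ((q.1 : ℝ) / (1 - (q.1 : ℝ))), q.2)) (s₀, x₀) := by
          apply ContinuousAt.prodMk
          · apply continuous_real_toNNReal.continuousAt.comp
            apply ContinuousAt.div
            · exact (continuous_subtype_val.comp continuous_fst).continuousAt
            · exact (continuous_const.sub (continuous_subtype_val.comp continuous_fst)).continuousAt
            · intro h
              apply hs
              apply Subtype.ext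
              have : (s₀ : ℝ) = 1 := by linarith [sub_eq_zero.mp (by linarith [h] : (1 : ℝ) - (s₀ : ℝ) = 0)]
              simpa using this
          · exact continuous_snd.continuousAt
        exact hcont.continuousAt.comp hg
      apply hG.congr
      have hop : IsOpen {q : I × M | q.1 ≠ 1} := isOpen_ne.preimage continuous_fst
      filter_upwards [hop.mem_nhds hs] with q hq
      simp only [hHdef, if_neg hq]
  have hhom : (ContinuousMap.id M).Homotopic (ContinuousMap.const M p) := by
    refine ⟨⟨⟨H, hHcont⟩, ?_, ?_⟩⟩
    · intro x
      simp only [hHdef, ContinuousMap.coe_mk]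
      rw [if_neg (by norm_num : (0 : I) ≠ 1)]
      simp [hid x]
    · intro x
      simp [hHdef]
  exact (contractible_iff_id_nullhomotopic M).mpr ⟨p, hhom⟩
end

section
/- Let X be a topological space, let A ⊆ X be a closed subset, and suppose r : X × [0,1] → X × [0,1] is a retraction of X × [0,1] onto (A × [0,1]) ∪ (X × {0}) (i.e., r is continuous, its image is contained in (A × [0,1]) ∪ (X × {0}), and r fixes that set pointwise). Let π₁ : X × [0,1] → X and π₂ : X × [0,1] → [0,1] be the projections. Define u : X → [0,1] by u(x) = sup_{τ ∈ [0,1]} (τ − π₂(r(x,τ))) and H : X × [0,1] → X by H(x,s) = π₁(r(x,s)). Then: the supremum defining u is attained; u is continuous; A = u⁻¹(0); H is continuous with H(x,0) = x for all x ∈ X, H(a,s) = a for all a ∈ A and s ∈ [0,1], and H(x,1) ∈ A whenever u(x) < 1. In particular, (X, A) is an NDR pair. -/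
open unitInterval

/-- `S` is a retract of the topological space `Z`. -/
def IsRetract {Z : Type*} [TopologicalSpace Z] (S : Set Z) : Prop :=
  ∃ r : Z → Z, Continuous r ∧ Set.range r ⊆ S ∧ ∀ z ∈ S, r z = z

/-- The subset `(A × [0,1]) ∪ (X × {0})` of `X × [0,1]`. -/
def cylinderUnionBase {X : Type*} [TopologicalSpace X] (A : Set X) : Set (X × I) :=
  {p : X × I | p.1 ∈ A ∨ p.2 = 0}

/-- `(X, A)` is an NDR pair. -/
def IsNDRPair {X : Type*} [TopologicalSpace X] (A : Set X) : Prop :=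
  ∃ (u : X → I) (H : X × I → X),
    Continuous u ∧ A = u ⁻¹' {0} ∧
    Continuous H ∧ (∀ x : X, H (x, 0) = x) ∧
    (∀ a ∈ A, ∀ s : I, H (a, s) = a) ∧
    ∀ x : X, (u x : ℝ) < 1 → H (x, 1) ∈ A

/-! A point off `A × I` is retracted into `X × {0}`, so wherever `π₁ r(x, τ) ∉ A` the gap
`τ - π₂ r(x, τ)` equals `τ`. Hence `π₁ r(x, τ) ∈ A` as soon as `τ > u x`: for `τ = 1` this is the
last NDR condition, and if `u x = 0` it holds for every `τ > 0`, so closedness of `A` gives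
`x = π₁ r(x, 0) ∈ A`. Continuity of `u` is continuity of a supremum over the compact factor `I`. -/

theorem Continuous.exists_isGreatest_range {Y α : Type*} [TopologicalSpace Y] [CompactSpace Y]
    [Nonempty Y] [TopologicalSpace α] [LinearOrder α] [ClosedIciTopology α] {f : Y → α}
    (hf : Continuous f) : ∃ y, IsGreatest (Set.range f) (f y) := by
  obtain ⟨_, ⟨y, rfl⟩, hy⟩ := (isCompact_range hf).exists_isGreatest (Set.range_nonempty f)
  exact ⟨y, ⟨y, rfl⟩, hy⟩

theorem continuous_iSup_of_compactSpace {X Y α : Type*} [TopologicalSpace X]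
    [TopologicalSpace Y] [CompactSpace Y] [ConditionallyCompleteLinearOrder α]
    [TopologicalSpace α] [OrderTopology α] {f : X × Y → α} (hf : Continuous f) :
    Continuous fun x => ⨆ y, f (x, y) := by
  simpa only [iSup, Set.image_univ] using
    isCompact_univ.continuous_sSup (f := fun x y => f (x, y)) hf

theorem IsClosed.mem_of_forall_ne {Y Z : Type*} [TopologicalSpace Y] [TopologicalSpace Z]
    {A : Set Z} (hA : IsClosed A) {f : Y → Z} (hf : Continuous f) (y₀ : Y)
    [(nhdsWithin y₀ {y₀}ᶜ).NeBot] (h : ∀ y ≠ y₀, f y ∈ A) : f y₀ ∈ A :=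
  (IsClosed.closure_subset_iff (s := {y₀}ᶜ) (hA.preimage hf)).mpr h (dense_compl_singleton y₀ y₀)

theorem isNDRPair_of_continuous_real {X : Type*} [TopologicalSpace X] {A : Set X} (u : X → ℝ)
    (hu : Continuous u) (hu₀ : ∀ x, 0 ≤ u x) (hu₁ : ∀ x, u x ≤ 1) (hA : A = {x | u x = 0})
    (H : X × I → X) (hH : Continuous H) (hH₀ : ∀ x, H (x, 0) = x)
    (hHA : ∀ a ∈ A, ∀ s, H (a, s) = a) (hH₁ : ∀ x, u x < 1 → H (x, 1) ∈ A) :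
    IsNDRPair A := by
  refine ⟨fun x => ⟨u x, hu₀ x, hu₁ x⟩, H, hu.subtype_mk _, ?_, hH, hH₀, hHA, hH₁⟩
  ext x
  simp [hA, ← Subtype.coe_inj]

theorem bddAbove_range_sub_retraction_snd {X : Type*} (r : X × I → X × I) (x : X) :
    BddAbove (Set.range fun τ : I => (τ : ℝ) - (r (x, τ)).2) :=
  ⟨1, Set.forall_mem_range.2 fun τ => by linarith [τ.2.2, (r (x, τ)).2.2.1]⟩

theorem iSup_sub_retraction_snd_le_one {X : Type*} (r : X × I → X × I) (x : X) :
    ⨆ τ : I, ((τ : ℝ) - (r (x, τ)).2) ≤ 1 :=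
  ciSup_le fun τ => by linarith [τ.2.2, (r (x, τ)).2.2.1]

section Retraction

variable {X : Type*} [TopologicalSpace X] {A : Set X} {r : X × I → X × I}

theorem retraction_apply_of_mem (hfix : ∀ p ∈ cylinderUnionBase A, r p = p) {a : X} (ha : a ∈ A)
    (s : I) : r (a, s) = (a, s) :=
  hfix _ (Or.inl ha)

theorem retraction_apply_zero (hfix : ∀ p ∈ cylinderUnionBase A, r p = p) (x : X) :
    r (x, 0) = (x, 0) :=
  hfix _ (Or.inr rfl)

theorem iSup_sub_retraction_snd_nonneg (hfix : ∀ p ∈ cylinderUnionBase A, r p = p) (x : X) :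
    0 ≤ ⨆ τ : I, ((τ : ℝ) - (r (x, τ)).2) :=
  le_ciSup_of_le (bddAbove_range_sub_retraction_snd r x) 0 (by simp [retraction_apply_zero hfix])

theorem retraction_fst_mem_of_iSup_lt (hrange : ∀ p, r p ∈ cylinderUnionBase A) {x : X} {τ : I}
    (hτ : ⨆ t : I, ((t : ℝ) - (r (x, t)).2) < τ) : (r (x, τ)).1 ∈ A := by
  refine (hrange (x, τ)).resolve_right fun hzero => hτ.not_ge ?_
  simpa [hzero] using le_ciSup (bddAbove_range_sub_retraction_snd r x) τ

theorem iSup_sub_retraction_snd_eq_zero_iff (hA : IsClosed A) (hr : Continuous r)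
    (hrange : ∀ p, r p ∈ cylinderUnionBase A) (hfix : ∀ p ∈ cylinderUnionBase A, r p = p)
    (x : X) : ⨆ τ : I, ((τ : ℝ) - (r (x, τ)).2) = 0 ↔ x ∈ A := by
  constructor
  · intro hzero
    have hmem : ∀ τ ≠ (0 : I), (r (x, τ)).1 ∈ A := fun τ hτ =>
      retraction_fst_mem_of_iSup_lt hrange (hzero ▸ unitInterval.pos_iff_ne_zero.2 hτ)
    simpa [retraction_apply_zero hfix] using hA.mem_of_forall_ne (by fun_prop) 0 hmem
  · intro hx
    simp [retraction_apply_of_mem hfix hx]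

end Retraction

/-- From a retraction `r` of `X × [0,1]` onto `(A × [0,1]) ∪ (X × {0})` one obtains an NDR-pair
structure: `u(x) = sup_{τ ∈ [0,1]} (τ - π₂(r(x,τ)))` is attained and continuous with
`A = u⁻¹(0)`, and `H(x,s) = π₁(r(x,s))` is a continuous homotopy with the NDR properties. -/
theorem ndrPair_of_retraction {X : Type*} [TopologicalSpace X] (A : Set X) (hA : IsClosed A)
    (r : X × I → X × I) (hr : Continuous r)
    (hrange : ∀ p : X × I, r p ∈ cylinderUnionBase A)
    (hfix : ∀ p ∈ cylinderUnionBase A, r p = p) :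
    (∀ x : X, ∃ τ : I,
        IsGreatest (Set.range fun τ₀ : I => (τ₀ : ℝ) - ((r (x, τ₀)).2 : ℝ))
          ((τ : ℝ) - ((r (x, τ)).2 : ℝ))) ∧
      Continuous (fun x : X => ⨆ τ₀ : I, ((τ₀ : ℝ) - ((r (x, τ₀)).2 : ℝ))) ∧
      A = {x : X | (⨆ τ₀ : I, ((τ₀ : ℝ) - ((r (x, τ₀)).2 : ℝ))) = 0} ∧
      Continuous (fun p : X × I => (r p).1) ∧
      (∀ x : X, (r (x, 0)).1 = x) ∧
      (∀ a ∈ A, ∀ s : I, (r (a, s)).1 = a) ∧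
      (∀ x : X, (⨆ τ₀ : I, ((τ₀ : ℝ) - ((r (x, τ₀)).2 : ℝ))) < 1 → (r (x, 1)).1 ∈ A) ∧
      IsNDRPair A := by
  have hgap : Continuous fun p : X × I => (p.2 : ℝ) - (r p).2 := by fun_prop
  have hu := continuous_iSup_of_compactSpace hgap
  have hAu : A = {x | ⨆ τ : I, ((τ : ℝ) - (r (x, τ)).2) = 0} :=
    Set.ext fun x => (iSup_sub_retraction_snd_eq_zero_iff hA hr hrange hfix x).symm
  have hH : Continuous fun p : X × I => (r p).1 := continuous_fst.comp hr
  have hH₀ : ∀ x, (r (x, 0)).1 = x := fun x => by rw [retraction_apply_zero hfix]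
  have hHA : ∀ a ∈ A, ∀ s, (r (a, s)).1 = a := fun a ha s => by
    rw [retraction_apply_of_mem hfix ha]
  have hH₁ : ∀ x, ⨆ τ : I, ((τ : ℝ) - (r (x, τ)).2) < 1 → (r (x, 1)).1 ∈ A :=
    fun x hx => retraction_fst_mem_of_iSup_lt hrange (by simpa using hx)
  exact ⟨fun x => (hgap.comp (Continuous.prodMk_right x)).exists_isGreatest_range, hu, hAu, hH,
    hH₀, hHA, hH₁, isNDRPair_of_continuous_real _ hu (iSup_sub_retraction_snd_nonneg hfix)
      (iSup_sub_retraction_snd_le_one r) hAu _ hH hH₀ hHA hH₁⟩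
end

section
/- Let X be a topological space and A ⊆ X. Suppose (1) A is a weak deformation retract of X, and (2) there exist an open set W with A ⊆ W ⊆ X and a continuous H : X × [0,1] → X such that H(x,0) = x for all x ∈ X, H(a,s) = a for all a ∈ A and s ∈ [0,1], and H(x,1) ∈ A for all x ∈ W. Then A is a strong deformation retract of X. -/
open unitInterval

/-- `A` is a weak deformation retract of `X`: every open neighbourhood of `A` contains a
strong deformation retract of `X` containing `A`. -/
def IsWeakDeformationRetract {X : Type*} [TopologicalSpace X] (A : Set X) : Prop :=
  ∀ U : Set X, IsOpen U → A ⊆ U →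
    ∃ V : Set X, A ⊆ V ∧ V ⊆ U ∧ IsStrongDeformationRetract V

/-- If `A` is a weak deformation retract of `X` and there are an open set `W ⊇ A` and a
homotopy `H` which is the identity at time `0`, stationary on `A`, and sends `W` into `A` at
time `1`, then `A` is a strong deformation retract of `X`. -/
theorem strongDeformationRetract_of_weak_and_nbhdHomotopy
    {X : Type*} [TopologicalSpace X] (A : Set X)
    (hweak : IsWeakDeformationRetract A)
    (hnbhd : ∃ (W : Set X) (H : X × I → X), IsOpen W ∧ A ⊆ W ∧ Continuous H ∧
      (∀ x : X, H (x, 0) = x) ∧ (∀ a ∈ A, ∀ s : I, H (a, s) = a) ∧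
      ∀ x ∈ W, H (x, 1) ∈ A) :
    IsStrongDeformationRetract A := by
  obtain ⟨W, H, hWopen, hAW, hHc, hH0, hHA, hH1⟩ := hnbhd
  obtain ⟨V, hAV, hVW, G, hGc, hG0, hG1, hGV⟩ := hweak W hWopen hAW
  let g₁ : C(X, X) := ⟨fun x => G (x, 1), hGc.comp (by continuity)⟩
  let g₂ : C(X, X) := ⟨fun x => H (G (x, 1), 1), by
    exact hHc.comp ((hGc.comp (by continuity)).prodMk continuous_const)⟩
  let F₁ : ContinuousMap.Homotopy (ContinuousMap.id X) g₁ :=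
    { toFun := fun p => G (p.2, p.1)
      continuous_toFun := hGc.comp (continuous_snd.prodMk continuous_fst)
      map_zero_left := fun x => hG0 x
      map_one_left := fun x => rfl }
  let F₂ : ContinuousMap.Homotopy g₁ g₂ :=
    { toFun := fun p => H (G (p.2, 1), p.1)
      continuous_toFun := hHc.comp
        (((hGc.comp (continuous_snd.prodMk continuous_const))).prodMk continuous_fst)
      map_zero_left := fun x => hH0 _
      map_one_left := fun x => rfl }
  let K := F₁.trans F₂
  refine ⟨fun q => K (q.2, q.1), K.continuous.comp (continuous_snd.prodMk continuous_fst),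
    fun x => K.apply_zero x, fun x => ?_, fun a ha s => ?_⟩
  · have := K.apply_one x
    simp only [K] at this ⊢
    rw [this]
    exact hH1 _ (hVW (hG1 x))
  · have haV : a ∈ V := hAV ha
    show K (s, a) = a
    rw [ContinuousMap.Homotopy.trans_apply]
    split_ifs with h
    · exact hGV a haV _
    · show H (G (a, 1), _) = a
      rw [hGV a haV 1]
      exact hHA a ha _
end

section
/- Let X be a topological space and A ⊆ X. If A is a weak deformation retract of X and A is a neighbourhood deformation retract of X (i.e., there is an open set U with A ⊆ U ⊆ X such that A is a deformation retract of U), then A is a deformation retract of X; in particular, A and X are homotopy equivalent. -/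
open unitInterval

/-- `A` is a deformation retract of `X` (in the weak sense: the homotopy from the identity to
the retraction need not be stationary on `A`). -/
def IsDeformationRetract {X : Type*} [TopologicalSpace X] (A : Set X) : Prop :=
  ∃ (r : X → X) (H : X × I → X),
    Continuous r ∧ Set.range r ⊆ A ∧ (∀ a ∈ A, r a = a) ∧
    Continuous H ∧ (∀ x : X, H (x, 0) = x) ∧ ∀ x : X, H (x, 1) = r x

/-- A deformation retract gives a homotopy equivalence. -/
theorem homotopyEquiv_of_deformationRetract
    {X : Type*} [TopologicalSpace X] (A : Set X)
    (h : IsDeformationRetract A) :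
    Nonempty (ContinuousMap.HomotopyEquiv ↥A X) := by
  obtain ⟨r, H, hrc, hrr, hra, hHc, hH0, hH1⟩ := h
  let ι : C(↥A, X) := ⟨Subtype.val, continuous_subtype_val⟩
  let ρ : C(X, ↥A) := ⟨fun x => ⟨r x, hrr ⟨x, rfl⟩⟩, hrc.subtype_mk _⟩
  have F : ContinuousMap.Homotopy (ContinuousMap.id X) ⟨r, hrc⟩ :=
    { toFun := fun p => H (p.2, p.1)
      continuous_toFun := hHc.comp (continuous_snd.prodMk continuous_fst)
      map_zero_left := hH0
      map_one_left := hH1 }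
  refine ⟨⟨ι, ρ, ?_, ?_⟩⟩
  · have : ρ.comp ι = ContinuousMap.id ↥A := by
      ext a
      exact hra a.1 a.2
    rw [this]
  · have : ι.comp ρ = (⟨r, hrc⟩ : C(X, X)) := by ext x; rfl
    rw [this]
    exact ⟨F.symm⟩

/-- If `A` is a weak deformation retract of `X` and a neighbourhood deformation retract of `X`,
then `A` is a deformation retract of `X`; in particular `A` and `X` are homotopy equivalent. -/
theorem deformationRetract_of_weak_and_nbhd
    {X : Type*} [TopologicalSpace X] (A : Set X)
    (hweak : IsWeakDeformationRetract A)
    (hnbhd : ∃ U : Set X, IsOpen U ∧ A ⊆ U ∧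
      IsDeformationRetract (Subtype.val ⁻¹' A : Set ↥U)) :
    IsDeformationRetract A ∧ Nonempty (ContinuousMap.HomotopyEquiv ↥A X) := by
  obtain ⟨U, hUo, hAU, r', H', hr'c, hr'r, hr'a, hH'c, hH'0, hH'1⟩ := hnbhd
  obtain ⟨V, hAV, hVU, H, hHc, hH0, hH1, hHs⟩ := hweak U hUo hAU
  -- the map x ↦ H(x,1) lands in U
  have hg : Continuous (fun x : X => H (x, 1)) :=
    hHc.comp (continuous_id.prodMk continuous_const)
  let g : X → ↥U := fun x => ⟨H (x, 1), hVU (hH1 x)⟩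
  have hgc : Continuous g := hg.subtype_mk _
  let r : X → X := fun x => (r' (g x) : X)
  have hrc : Continuous r := continuous_subtype_val.comp (hr'c.comp hgc)
  have hrange : Set.range r ⊆ A := by
    rintro _ ⟨x, rfl⟩
    exact hr'r ⟨g x, rfl⟩
  have hfix : ∀ a ∈ A, r a = a := by
    intro a ha
    have h1 : H (a, 1) = a := hHs a (hAV ha) 1
    have hga : g a = ⟨a, hAU ha⟩ := Subtype.ext h1
    have : g a ∈ (Subtype.val ⁻¹' A : Set ↥U) := by rw [hga]; exact ha
    rw [show r a = (r' (g a) : X) from rfl, hr'a _ this, hga]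
  -- homotopy via trans
  have F1 : ContinuousMap.Homotopy (ContinuousMap.id X) ⟨fun x => H (x, 1), hg⟩ :=
    { toFun := fun p => H (p.2, p.1)
      continuous_toFun := hHc.comp (continuous_snd.prodMk continuous_fst)
      map_zero_left := hH0
      map_one_left := fun x => rfl }
  have F2 : ContinuousMap.Homotopy (⟨fun x => H (x, 1), hg⟩ : C(X, X)) ⟨r, hrc⟩ :=
    { toFun := fun p => (H' (g p.2, p.1) : X)
      continuous_toFun :=
        continuous_subtype_val.comp (hH'c.comp ((hgc.comp continuous_snd).prodMk
          continuous_fst))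
      map_zero_left := fun x => congrArg Subtype.val (hH'0 (g x))
      map_one_left := fun x => congrArg Subtype.val (hH'1 (g x)) }
  have F := F1.trans F2
  have hdef : IsDeformationRetract A := by
    refine ⟨r, fun p => F (p.2, p.1), hrc, hrange, hfix, F.continuous.comp (continuous_snd.prodMk continuous_fst), ?_, ?_⟩
    · intro x; exact F.apply_zero x
    · intro x; exact F.apply_one x
  
  exact ⟨hdef, homotopyEquiv_of_deformationRetract A hdef⟩
end

section
/- For every n ≥ 0, the set (Sⁿ × [0,1]) ∪ (D^{n+1} × {0}) is a retract of D^{n+1} × [0,1], where Sⁿ = {x ∈ ℝ^{n+1} : ⟨x,x⟩ = 1} and D^{n+1} = {x ∈ ℝ^{n+1} : ⟨x,x⟩ ≤ 1}; consequently, the inclusion ι : Sⁿ ↪ D^{n+1} is a cofibration. -/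
open unitInterval

/-!
The data `g`, `h` of a homotopy extension problem for `A ⊆ X` glue to a map on
`(A × I) ∪ (X × {0})`, continuous because both pieces are closed when `A` is; composing it with
a retraction of `X × I` onto that set solves the problem. For the disk, such a retraction is the
radial projection from the point `(0, 2)` above the cylinder `Dⁿ⁺¹ × I`: the ray from `(0, 2)`
through `(x, t)` leaves the cylinder either through the side `Sⁿ × I` or through the bottom
`Dⁿ⁺¹ × {0}`.
-/

open Metric

section Gluing

variable {X Y : Type*} {A : Set X}

open Classical in
noncomputable def cylinderGlue (g : X → Y) (h : A × I → Y) (p : X × I) : Y :=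
  if hx : p.1 ∈ A then h (⟨p.1, hx⟩, p.2) else g p.1

variable {g : X → Y} {h : A × I → Y}

theorem cylinderGlue_of_mem {x : X} (hx : x ∈ A) (s : I) :
    cylinderGlue g h (x, s) = h (⟨x, hx⟩, s) :=
  dif_pos hx

theorem cylinderGlue_zero (hgh : ∀ a : A, h (a, 0) = g a) (x : X) :
    cylinderGlue g h (x, 0) = g x := by
  by_cases hx : x ∈ A
  · exact (cylinderGlue_of_mem hx 0).trans (hgh ⟨x, hx⟩)
  · exact dif_neg hx

variable [TopologicalSpace X] [TopologicalSpace Y]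

theorem continuousOn_cylinderGlue (hA : IsClosed A) (hg : Continuous g) (hh : Continuous h)
    (hgh : ∀ a : A, h (a, 0) = g a) : ContinuousOn (cylinderGlue g h) (cylinderUnionBase A) := by
  have hside : ContinuousOn (cylinderGlue g h) {p : X × I | p.1 ∈ A} := by
    rw [continuousOn_iff_continuous_domRestrict]
    have heq : Set.domRestrict {p : X × I | p.1 ∈ A} (cylinderGlue g h) =
        fun p => h (⟨p.1.1, p.2⟩, p.1.2) :=
      funext fun ⟨⟨x, t⟩, hx⟩ => cylinderGlue_of_mem (x := x) hx t
    rw [heq]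
    fun_prop
  have hbottom : ContinuousOn (cylinderGlue g h) {p : X × I | p.2 = 0} := by
    refine (hg.comp continuous_fst).continuousOn.congr ?_
    rintro ⟨x, _⟩ (rfl : _ = (0 : I))
    exact cylinderGlue_zero hgh x
  exact hside.union_of_isClosed hbottom (hA.preimage continuous_fst)
    (isClosed_eq continuous_snd continuous_const)

theorem inclusionIsCofibration_of_isRetract_cylinderUnionBase (hA : IsClosed A)
    (hret : IsRetract (cylinderUnionBase A)) : InclusionIsCofibration A := by
  obtain ⟨r, hr, hrange, hfix⟩ := hret
  intro Y _ g h hg hh hgh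
  refine ⟨cylinderGlue g h ∘ r, ?_, fun x => ?_, fun a s => ?_⟩
  · exact (continuousOn_cylinderGlue hA hg hh hgh).comp_continuous hr
      fun p => hrange ⟨p, rfl⟩
  · rw [Function.comp_apply, hfix (x, 0) (Or.inr rfl)]
    exact cylinderGlue_zero hgh x
  · rw [Function.comp_apply, hfix (a, s) (Or.inl a.2)]
    exact cylinderGlue_of_mem a.2 s

end Gluing

section DiskRetraction

variable {E : Type*} [NormedAddCommGroup E]

/-- The reciprocal of the parameter at which the ray from `(0, 2)` through `(x, t)` leaves the
cylinder `closedBall 0 1 × Icc 0 1`. -/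
noncomputable def diskCylinderExitScale (p : E × ℝ) : ℝ :=
  max ‖p.1‖ (1 - p.2 / 2)

theorem diskCylinderExitScale_pos {p : E × ℝ} (hp : p.2 < 2) : 0 < diskCylinderExitScale p :=
  lt_max_of_lt_right (by linarith)

variable [NormedSpace ℝ E]

noncomputable def diskCylinderRetraction (p : E × ℝ) : E × ℝ :=
  ((diskCylinderExitScale p)⁻¹ • p.1, 2 - (2 - p.2) / diskCylinderExitScale p)

theorem continuousOn_diskCylinderRetraction :
    ContinuousOn (diskCylinderRetraction (E := E)) {p | p.2 < 2} := by
  have hscale : Continuous (diskCylinderExitScale (E := E)) := by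
    unfold diskCylinderExitScale; fun_prop
  have hne : ∀ p ∈ {p : E × ℝ | p.2 < 2}, diskCylinderExitScale p ≠ 0 :=
    fun p hp => (diskCylinderExitScale_pos hp).ne'
  exact ((hscale.continuousOn.inv₀ hne).smul continuous_fst.continuousOn).prodMk
    (continuousOn_const.sub ((continuous_const.sub continuous_snd).continuousOn.div
      hscale.continuousOn hne))

theorem norm_diskCylinderRetraction_fst_le_one {p : E × ℝ} (hp : p.2 < 2) :
    ‖(diskCylinderRetraction p).1‖ ≤ 1 := by
  have hμ := diskCylinderExitScale_pos hp
  rw [diskCylinderRetraction, norm_smul, norm_inv, Real.norm_of_nonneg hμ.le,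
    inv_mul_le_one₀ hμ]
  exact le_max_left _ _

theorem diskCylinderRetraction_snd_mem_Icc {x : E} {t : ℝ} (hx : ‖x‖ ≤ 1) (ht : t ≤ 1) :
    (diskCylinderRetraction (x, t)).2 ∈ Set.Icc (0 : ℝ) 1 := by
  have hμ := diskCylinderExitScale_pos (p := (x, t)) (by simpa using ht.trans_lt one_lt_two)
  have hle : diskCylinderExitScale (x, t) ≤ 2 - t := max_le (by linarith) (by linarith)
  have hge : 1 - t / 2 ≤ diskCylinderExitScale (x, t) := le_max_right _ _
  simp only [diskCylinderRetraction, Set.mem_Icc, sub_nonneg, tsub_le_iff_right]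
  constructor
  · rw [div_le_iff₀ hμ]; linarith
  · rw [← sub_le_iff_le_add', le_div_iff₀ hμ]; linarith

theorem diskCylinderRetraction_mem_side_or_bottom {p : E × ℝ} (hp : p.2 < 2) :
    ‖(diskCylinderRetraction p).1‖ = 1 ∨ (diskCylinderRetraction p).2 = 0 := by
  have hμ := diskCylinderExitScale_pos hp
  rcases max_choice ‖p.1‖ (1 - p.2 / 2) with hside | hbottom
  · left
    rw [diskCylinderRetraction, norm_smul, norm_inv, Real.norm_of_nonneg hμ.le,
      diskCylinderExitScale, hside]
    exact inv_mul_cancel₀ (hside ▸ hμ.ne')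
  · right
    rw [diskCylinderExitScale, hbottom] at hμ
    rw [diskCylinderRetraction, diskCylinderExitScale, hbottom, sub_eq_zero, eq_comm,
      div_eq_iff hμ.ne']
    ring

theorem diskCylinderRetraction_eq_self {x : E} {t : ℝ} (hx : ‖x‖ ≤ 1) (ht : 0 ≤ t)
    (hxt : ‖x‖ = 1 ∨ t = 0) : diskCylinderRetraction (x, t) = (x, t) := by
  have hscale : diskCylinderExitScale (x, t) = 1 := by
    rcases hxt with hx1 | rfl
    · simp only [diskCylinderExitScale, hx1]
      exact max_eq_left (by linarith)
    · simpa [diskCylinderExitScale] using hx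
  simp [diskCylinderRetraction, hscale]

theorem isRetract_cylinderUnionBase_sphere :
    IsRetract (cylinderUnionBase {x : closedBall (0 : E) 1 | (x : E) ∈ sphere 0 1}) := by
  let toProd : closedBall (0 : E) 1 × I → E × ℝ := fun p => (p.1, p.2)
  have hlt : ∀ p, (toProd p).2 < 2 := fun p => p.2.2.2.trans_lt one_lt_two
  have hcont : Continuous (diskCylinderRetraction ∘ toProd) :=
    continuousOn_diskCylinderRetraction.comp_continuous (by fun_prop) hlt
  refine ⟨fun p =>
    (⟨_, mem_closedBall_zero_iff.mpr (norm_diskCylinderRetraction_fst_le_one (hlt p))⟩,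
      ⟨_, diskCylinderRetraction_snd_mem_Icc (mem_closedBall_zero_iff.mp p.1.2) p.2.2.2⟩),
    (hcont.fst.subtype_mk _).prodMk (hcont.snd.subtype_mk _), ?_, ?_⟩
  · rintro _ ⟨p, rfl⟩
    rcases diskCylinderRetraction_mem_side_or_bottom (hlt p) with hside | hbottom
    · exact Or.inl (mem_sphere_zero_iff_norm.mpr hside)
    · exact Or.inr (Subtype.ext hbottom)
  · rintro ⟨x, t⟩ hxt
    have h := diskCylinderRetraction_eq_self (mem_closedBall_zero_iff.mp x.2) t.2.1
      (hxt.imp mem_sphere_zero_iff_norm.mp (congrArg Subtype.val))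
    exact Prod.ext (Subtype.ext (congrArg Prod.fst h)) (Subtype.ext (congrArg Prod.snd h))

end DiskRetraction

/-- For every `n ≥ 0`, `(Sⁿ × [0,1]) ∪ (Dⁿ⁺¹ × {0})` is a retract of `Dⁿ⁺¹ × [0,1]`;
consequently the inclusion `Sⁿ ↪ Dⁿ⁺¹` is a cofibration. -/
theorem sphere_inclusion_disk_cofibration (n : ℕ) :
    IsRetract (cylinderUnionBase
        {x : ↥(Metric.closedBall (0 : EuclideanSpace ℝ (Fin (n + 1))) 1) |
          (x : EuclideanSpace ℝ (Fin (n + 1))) ∈ Metric.sphere 0 1}) ∧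
      InclusionIsCofibration
        {x : ↥(Metric.closedBall (0 : EuclideanSpace ℝ (Fin (n + 1))) 1) |
          (x : EuclideanSpace ℝ (Fin (n + 1))) ∈ Metric.sphere 0 1} :=
  ⟨isRetract_cylinderUnionBase_sphere,
    inclusionIsCofibration_of_isRetract_cylinderUnionBase
      (isClosed_sphere.preimage continuous_subtype_val) isRetract_cylinderUnionBase_sphere⟩
end

section
/- There is no semi-dynamical system φ on the circle S¹ = {x ∈ ℝ² : ⟨x,x⟩ = 1} under which some singleton {p} ⊆ S¹ is an invariant, globally asymptotically stable attractor (i.e., with domain of attraction equal to all of S¹). -/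
open unitInterval

/-! Lyapunov stability and global attraction of `p` on a compact space give uniform attraction:
some time-`T` map sends the whole space into `S¹ \ {q}` for a point `q ≠ p`. But every time map
is homotopic to the identity, and a self-map of the circle homotopic to the identity is onto:
lifting the homotopy, applied to the loop `s ↦ exp (2π s)`, along `exp : ℝ → S¹` shows
that the image of the loop still winds once around the circle. -/

open Real ContinuousMap

theorem Circle.surjective_of_homotopic_id {f : C(Circle, Circle)}
    (hf : (ContinuousMap.id Circle).Homotopic f) : Function.Surjective f := by
  obtain ⟨F⟩ := hf
  let γ : C(I, Circle) := ⟨fun s => Circle.exp (2 * π * s), by fun_prop⟩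
  let H : C(I × I, Circle) := F.toContinuousMap.comp (ContinuousMap.prodMap (.id I) γ)
  let θ₀ : C(I, ℝ) := ⟨fun s => 2 * π * s, by fun_prop⟩
  have H_0 : ∀ s, H (0, s) = Circle.exp (θ₀ s) := fun s => F.apply_zero (γ s)
  let G := Circle.isCoveringMap_exp.liftHomotopy H θ₀ H_0
  have hG : ∀ t s, Circle.exp (G (t, s)) = F (t, γ s) := fun t s =>
    congr_fun (Circle.isCoveringMap_exp.liftHomotopy_lifts H θ₀ H_0) (t, s)
  have hG0 : ∀ s, G (0, s) = 2 * π * s := Circle.isCoveringMap_exp.liftHomotopy_zero H θ₀ H_0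
  -- both sides lift the path `t ↦ F (t, 1)` and they agree at `t = 0`
  have hloop : (fun t => G (t, 1)) = fun t => G (t, 0) + 2 * π := by
    refine Circle.isCoveringMap_exp.eq_of_comp_eq (by fun_prop) (by fun_prop) ?_ 0 ?_
    · ext t
      simp only [Function.comp_apply, Circle.exp_add_two_pi, hG]
      congr 2
      simp [γ]
    · simp [hG0]
  intro z
  obtain ⟨θ, rfl⟩ := Circle.exp_surjective z
  have hθ := toIcoMod_mem_Ico two_pi_pos (G (1, 0)) θ
  rw [← congr_fun hloop 1] at hθ
  obtain ⟨s, hs : G (1, s) = _⟩ :=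
    intermediate_value_univ 0 1 (f := fun s => G (1, s)) (by fun_prop) (Set.Ico_subset_Icc_self hθ)
  refine ⟨γ s, ?_⟩
  rw [← F.apply_one, ← hG, hs, toIcoMod, Circle.periodic_exp.sub_zsmul_eq]

instance : Nontrivial Circle := ⟨⟨-1, 1, fun h => by norm_num [Circle.ext_iff] at h⟩⟩

noncomputable def EuclideanSpace.unitSphereHomeomorphCircle :
    Metric.sphere (0 : EuclideanSpace ℝ (Fin 2)) 1 ≃ₜ Circle :=
  Complex.orthonormalBasisOneI.repr.symm.toHomeomorph.subtype fun x => by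
    change x ∈ Metric.sphere 0 1 ↔ _ ∈ Metric.sphere (0 : ℂ) 1
    simp only [mem_sphere_zero_iff_norm, LinearIsometryEquiv.coe_toHomeomorph,
      LinearIsometryEquiv.norm_map]

theorem ContinuousMap.Homotopic.surjective_of_homeomorph_circle {X : Type*} [TopologicalSpace X]
    (e : X ≃ₜ Circle) {f : C(X, X)} (hf : (ContinuousMap.id X).Homotopic f) :
    Function.Surjective f := by
  have hconj : (ContinuousMap.id Circle).Homotopic ((e : C(X, Circle)).comp (f.comp e.symm)) := by
    convert (Homotopic.refl (e : C(X, Circle))).comp (hf.comp (.refl (e.symm : C(Circle, X))))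
    ext z; simp
  have := Circle.surjective_of_homotopic_id hconj
  simpa using e.symm.surjective.comp (this.comp e.surjective)

namespace IsSemiFlow

variable {M : Type*} [TopologicalSpace M] {φ : NNReal → M → M}

theorem continuous_apply (hφ : IsSemiFlow φ) (t : NNReal) : Continuous (φ t) :=
  hφ.1.comp (Continuous.prodMk_right t)

theorem homotopic_id (hφ : IsSemiFlow φ) (T : NNReal) :
    (ContinuousMap.id M).Homotopic ⟨φ T, hφ.continuous_apply T⟩ :=
  ⟨{ toFun := fun x => φ (unitInterval.toNNReal x.1 * T) x.2
     continuous_toFun :=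
       hφ.1.comp (f := fun x : I × M => (unitInterval.toNNReal x.1 * T, x.2)) (by fun_prop)
     map_zero_left := fun x => by simpa using hφ.2.1 x
     map_one_left := fun x => by simp }⟩

theorem exists_range_subset_of_isLyapunovStable [CompactSpace M] (hφ : IsSemiFlow φ) {A : Set M}
    (hA : IsLyapunovStable φ A) (hdom : domainOfAttraction φ A = Set.univ) {U : Set M}
    (hU : IsOpen U) (hAU : A ⊆ U) : ∃ T, ∀ t, T ≤ t → Set.range (φ t) ⊆ U := by
  obtain ⟨V, hVo, hAV, -, hVU⟩ := hA U hU hAU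
  have hentry : ∀ x, ∃ T, φ T x ∈ V := fun x => by
    obtain ⟨T, hT⟩ := (hdom.symm ▸ Set.mem_univ x : x ∈ domainOfAttraction φ A) V hVo hAV
    exact ⟨T, hT T le_rfl⟩
  choose τ hτ using hentry
  obtain ⟨F, hF⟩ := isCompact_univ.elim_finite_subcover (fun x => φ (τ x) ⁻¹' V)
    (fun x => hVo.preimage (hφ.continuous_apply _)) fun y _ => Set.mem_iUnion.2 ⟨y, hτ y⟩
  refine ⟨F.sup τ, fun t ht => ?_⟩
  rintro _ ⟨y, rfl⟩
  obtain ⟨x, hxF, hyx⟩ := Set.mem_iUnion₂.1 (hF (Set.mem_univ y))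
  have hτt : τ x ≤ t := (Finset.le_sup hxF).trans ht
  rw [← tsub_add_cancel_of_le hτt, ← hφ.2.2]
  exact hVU _ ⟨_, hyx, rfl⟩

end IsSemiFlow

/-- There is no semi-dynamical system on the circle `S¹` under which some singleton `{p}` is an
invariant, globally asymptotically stable attractor. -/
theorem no_semiflow_circle_point_global_attractor :
    ¬ ∃ (φ : NNReal → ↥(Metric.sphere (0 : EuclideanSpace ℝ (Fin 2)) 1) →
          ↥(Metric.sphere (0 : EuclideanSpace ℝ (Fin 2)) 1))
        (p : ↥(Metric.sphere (0 : EuclideanSpace ℝ (Fin 2)) 1)),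
        IsSemiFlow φ ∧
        IsAsymptoticallyStableAttractor φ {p} ∧
        domainOfAttraction φ {p} = Set.univ := by
  rintro ⟨φ, p, hφ, ⟨-, -, hstable, -⟩, hdom⟩
  let e := EuclideanSpace.unitSphereHomeomorphCircle
  have : Nontrivial (Metric.sphere (0 : EuclideanSpace ℝ (Fin 2)) 1) := e.toEquiv.nontrivial
  obtain ⟨q, hqp⟩ := exists_ne p
  obtain ⟨T, hT⟩ := hφ.exists_range_subset_of_isLyapunovStable hstable hdom
    isOpen_compl_singleton (Set.singleton_subset_iff.2 hqp.symm)
  obtain ⟨x, hx⟩ := (hφ.homotopic_id T).surjective_of_homeomorph_circle e q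
  exact hT T le_rfl ⟨x, hx⟩ rfl
end
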